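/- The cardinality of a semitransitive but not transitive subsemigroup S of IS_n is at least n + 1. -/

import Mathlib

/-!
Say that `x` reaches `y` if some element of `S` maps `x` to `y`. This relation is transitive
because `S` is closed under composition and total because `S` is semitransitive, so some
`i ∈ X` reaches every point. Since `S` is not transitive, some `a` does not reach some `b`,
and then some `g ∈ S` maps `b` to `a`. If all powers of `g` were defined at `b`, then `b` would
be periodic, `g ^ d b = b` with `d > 0`, and `g ^ (2d - 1)` would map `a = g b` to `b`. So some
element of `S` is undefined at `b`, and composing it after an element mapping `i` to `b` gives
one undefined at `i`. Evaluation at `i` therefore maps `S` onto `Option X`, of size `n + 1`.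
-/

def IsSubsemigroup {X : Type*} (S : Set (X ≃. X)) : Prop :=
  ∀ f ∈ S, ∀ g ∈ S, f.trans g ∈ S

def IsTransitiveSet {X : Type*} (S : Set (X ≃. X)) : Prop :=
  ∀ x y : X, ∃ f ∈ S, f x = some y

def IsSemitransitiveSet {X : Type*} (S : Set (X ≃. X)) : Prop :=
  ∀ x y : X, ∃ f ∈ S, f x = some y ∨ f y = some x

theorem exists_forall_rel_of_trans_of_total {α : Type*} [Finite α] [Nonempty α]
    {r : α → α → Prop} (htrans : ∀ {x y z}, r x y → r y z → r x z)
    (htotal : ∀ x y, r x y ∨ r y x) : ∃ i, ∀ y, r i y := by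
  -- an element whose upper set is largest lies below everything
  obtain ⟨i, hi⟩ := Finite.exists_max fun x => {y | r x y}.ncard
  refine ⟨i, fun y => by_contra fun hiy => ?_⟩
  have hyi : r y i := (htotal i y).resolve_left hiy
  have hlt : {z | r i z} ⊂ {z | r y z} :=
    ⟨fun z hz => htrans hyi hz, fun hsub => hiy (hsub ((htotal y y).elim id id))⟩
  exact (Set.ncard_lt_ncard hlt).not_ge (hi y)

namespace PEquiv

variable {α : Type*}

instance : Monoid (α ≃. α) where
  mul f g := g.trans f
  one := PEquiv.refl α
  mul_assoc f g h := (trans_assoc h g f).symm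
  one_mul := trans_refl
  mul_one := refl_trans

theorem mul_apply (f g : α ≃. α) (x : α) : (f * g) x = (g x).bind f := rfl

theorem one_apply (x : α) : (1 : α ≃. α) x = some x := rfl

instance {β : Type*} [Finite α] [Finite β] : Finite (α ≃. β) :=
  Finite.of_injective _ DFunLike.coe_injective

theorem exists_pow_apply_eq_self [Finite α] {g : α ≃. α} {x : α}
    (hdef : ∀ k, (g ^ k) x ≠ none) : ∃ d, 0 < d ∧ (g ^ d) x = some x := by
  obtain ⟨m, n, hne, heq⟩ := Finite.exists_ne_map_eq_of_infinite fun k : ℕ => (g ^ k) x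
  wlog hlt : m < n generalizing m n
  · exact this n m hne.symm heq.symm (by omega)
  obtain ⟨d, rfl⟩ := Nat.exists_eq_add_of_lt hlt
  obtain ⟨y, hy⟩ := Option.ne_none_iff_exists'.1 (hdef (d + 1))
  obtain ⟨c, hc⟩ := Option.ne_none_iff_exists'.1 (hdef m)
  have hyc : (g ^ m) y = some c := by
    rw [← hc, heq, add_assoc, pow_add, mul_apply, hy, Option.bind_some]
  exact ⟨d + 1, d.succ_pos, hy.trans (congrArg some ((g ^ m).inj hyc hc))⟩

end PEquiv

section

variable {X : Type*} {S : Set (X ≃. X)}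

def Reaches (S : Set (X ≃. X)) (x y : X) : Prop :=
  ∃ f ∈ S, f x = some y

theorem IsSubsemigroup.reaches_trans (hS : IsSubsemigroup S) {x y z : X}
    (hxy : Reaches S x y) (hyz : Reaches S y z) : Reaches S x z := by
  obtain ⟨f, hf, hfx⟩ := hxy
  obtain ⟨g, hg, hgy⟩ := hyz
  exact ⟨f.trans g, hS f hf g hg, by rw [PEquiv.trans_eq_some]; exact ⟨y, hfx, hgy⟩⟩

theorem IsSemitransitiveSet.reaches_total (hsemi : IsSemitransitiveSet S) (x y : X) :
    Reaches S x y ∨ Reaches S y x := by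
  obtain ⟨f, hf, hxy | hyx⟩ := hsemi x y
  exacts [Or.inl ⟨f, hf, hxy⟩, Or.inr ⟨f, hf, hyx⟩]

theorem IsSubsemigroup.pow_succ_mem (hS : IsSubsemigroup S) {g : X ≃. X} (hg : g ∈ S) :
    ∀ k : ℕ, g ^ (k + 1) ∈ S
  | 0 => by rwa [zero_add, pow_one]
  | k + 1 => by rw [pow_succ']; exact hS _ (hS.pow_succ_mem hg k) g hg

theorem IsSubsemigroup.exists_apply_eq_none [Finite X] (hS : IsSubsemigroup S)
    {g : X ≃. X} {a b : X} (hg : g ∈ S) (hgb : g b = some a) (hab : ¬Reaches S a b) :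
    ∃ h ∈ S, h b = none := by
  by_contra! hdef
  have hpow : ∀ k, (g ^ k) b ≠ none
    | 0 => by simp [PEquiv.one_apply]
    | k + 1 => hdef _ (hS.pow_succ_mem hg k)
  obtain ⟨d, hd, hdb⟩ := PEquiv.exists_pow_apply_eq_self hpow
  obtain ⟨e, rfl⟩ := Nat.exists_eq_succ_of_ne_zero hd.ne'
  refine hab ⟨g ^ (2 * e + 1), hS.pow_succ_mem hg _, ?_⟩
  have hb : (g ^ (2 * e + 1 + 1)) b = some b := by
    rw [show 2 * e + 1 + 1 = (e + 1) + (e + 1) by ring, pow_add, PEquiv.mul_apply, hdb,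
      Option.bind_some, hdb]
  rwa [pow_succ, PEquiv.mul_apply, hgb, Option.bind_some] at hb

theorem card_option_le_ncard [Finite X] (i : X) (hS : ∀ o : Option X, ∃ f ∈ S, f i = o) :
    Nat.card (Option X) ≤ S.ncard := by
  have himage : (fun f : X ≃. X => f i) '' S = Set.univ :=
    Set.eq_univ_of_forall fun o => hS o
  rw [← Set.ncard_univ, ← himage]
  exact Set.ncard_image_le

end

theorem semitransitive_card_lower_bound_general {X : Type*} [Fintype X] (n : ℕ)
    (hcard : Fintype.card X = n) (S : Set (X ≃. X)) (hS : IsSubsemigroup S)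
    (hsemi : IsSemitransitiveSet S) (htr : ¬ IsTransitiveSet S) :
    n + 1 ≤ S.ncard := by
  obtain ⟨a, b, hab⟩ : ∃ a b, ¬Reaches S a b := by simpa [IsTransitiveSet, Reaches] using htr
  have : Nonempty X := ⟨a⟩
  obtain ⟨i, hi⟩ := 
    exists_forall_rel_of_trans_of_total (r := Reaches S) hS.reaches_trans hsemi.reaches_total
  obtain ⟨g, hg, hgb⟩ := (hsemi.reaches_total a b).resolve_left hab
  obtain ⟨h, hh, hhb⟩ := hS.exists_apply_eq_none hg hgb hab
  obtain ⟨f, hf, hfi⟩ := hi b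
  have hsurj : ∀ o : Option X, ∃ φ ∈ S, φ i = o
    | none => ⟨f.trans h, hS f hf h hh, by
      change (f i).bind h = none
      rw [hfi, Option.bind_some, hhb]⟩
    | some y => hi y
  calc n + 1 = Nat.card (Option X) := by simp [hcard]
    _ ≤ S.ncard := card_option_le_ncard i hsurj

/-- A semitransitive but not transitive subsemigroup of `IS_n` has at least `n + 1`
elements. -/
theorem semitransitive_card_lower_bound {X : Type*} [Fintype X] (n : ℕ) (hn : 1 ≤ n)
    (hcard : Fintype.card X = n) (S : Set (X ≃. X)) (hS : IsSubsemigroup S)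
    (hsemi : IsSemitransitiveSet S) (htr : ¬ IsTransitiveSet S) :
    n + 1 ≤ S.ncard :=
  semitransitive_card_lower_bound_general n hcard S hS hsemi htr
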